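/- Define T: (0,∞) → ℝ by T(z) = 1 − 2z (1 − e^{−1/(2z)}). Then: (a) T is twice differentiable and satisfies 2 z² T''(z) + (2z − 1) T'(z) − 2 T(z) = 0 for all z > 0; (b) lim_{z↓0} T(z) = 1 and lim_{z→∞} T(z) = 0; (c) −T'(z) = 2 − (1/z + 2) e^{−1/(2z)} for all z > 0; (d) every twice differentiable function h: (0,∞) → ℝ satisfying 2 z² h''(z) + (2z − 1) h'(z) − 2 h(z) = 0 for all z > 0 is of the form h(z) = c₁ z e^{−1/(2z)} + c₂ (2z − 1) for some constants c₁, c₂ ∈ ℝ. -/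

import Mathlib

open MeasureTheory Set Filter

noncomputable section

/-- the tail function of the killed exponential functional with
`q = 2`, `σξ² = 4`, `γη⁰ = 1`, `ση² = γξ⁰ = 0`. -/
def Ttail (z : ℝ) : ℝ := 1 - 2 * z * (1 - Real.exp (-(1 / (2 * z))))

/-!
The equation `2 z² h'' + (2z - 1) h' - 2h = 0` has the two solutions `y₁ = z e^{-1/(2z)}` and
`y₂ = 2z - 1`, with Wronskian `W(y₁, y₂) = e^{-1/(2z)} / (2z) ≠ 0`, and `T = 2 y₁ - y₂`.
By Abel's identity every Wronskian `W(h, k)` of two solutions satisfies the same first-order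
equation `a W' + b W = 0`, so `W(h, y₁) / W(y₁, y₂)` and `W(h, y₂) / W(y₁, y₂)` are constant on
`(0, ∞)`; the identity `h W(y₁, y₂) = y₁ W(h, y₂) - y₂ W(h, y₁)` then writes `h` as a combination
of `y₁` and `y₂`. The limits: `e^{-1/(2z)} → 0` as `z → 0⁺`, and as `z → ∞` the term
`2z (1 - e^{-1/(2z)})` is a difference quotient of `t ↦ e^{-t}` at `0`.
-/

open Real Topology

lemma hasDerivAt_deriv_of_eventually_hasDerivAt {f f' : ℝ → ℝ} {f'' z : ℝ}
    (hf : ∀ᶠ w in 𝓝 z, HasDerivAt f (f' w) w) (hf' : HasDerivAt f' f'' z) :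
    HasDerivAt (deriv f) f'' z :=
  hf'.congr_of_eventuallyEq (hf.mono fun _ hw => hw.deriv)

lemma HasDerivAt.div_eq_zero_of_same_rate {u v : ℝ → ℝ} {p z : ℝ}
    (hu : HasDerivAt u (p * u z) z) (hv : HasDerivAt v (p * v z) z) (hv₀ : v z ≠ 0) :
    HasDerivAt (fun w => u w / v w) 0 z :=
  (hu.div hv hv₀).congr_deriv (by ring)

def wronskian (f g : ℝ → ℝ) (z : ℝ) : ℝ := f z * deriv g z - deriv f z * g z

lemma mul_wronskian_eq (f g h : ℝ → ℝ) (z : ℝ) :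
    h z * wronskian f g z = f z * wronskian h g z - g z * wronskian h f z := by
  simp only [wronskian]; ring

lemma hasDerivAt_wronskian {f g : ℝ → ℝ} {z : ℝ}
    (hf : DifferentiableAt ℝ f z) (hf' : DifferentiableAt ℝ (deriv f) z)
    (hg : DifferentiableAt ℝ g z) (hg' : DifferentiableAt ℝ (deriv g) z) :
    HasDerivAt (wronskian f g) (f z * deriv (deriv g) z - deriv (deriv f) z * g z) z :=
  ((hf.hasDerivAt.mul hg'.hasDerivAt).sub (hf'.hasDerivAt.mul hg.hasDerivAt)).congr_deriv
    (by ring)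

def SolvesSecondOrderLinear (a b c : ℝ → ℝ) (s : Set ℝ) (y : ℝ → ℝ) : Prop :=
  ∀ z ∈ s, DifferentiableAt ℝ y z ∧ DifferentiableAt ℝ (deriv y) z ∧
    a z * deriv (deriv y) z + b z * deriv y z + c z * y z = 0

namespace SolvesSecondOrderLinear

variable {a b c : ℝ → ℝ} {s : Set ℝ} {f g h k : ℝ → ℝ}

theorem hasDerivAt_wronskian (hf : SolvesSecondOrderLinear a b c s f)
    (hg : SolvesSecondOrderLinear a b c s g) {z : ℝ} (hz : z ∈ s) (ha : a z ≠ 0) :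
    HasDerivAt (wronskian f g) (-(b z / a z) * wronskian f g z) z := by
  obtain ⟨hf₁, hf₂, hf₀⟩ := hf z hz
  obtain ⟨hg₁, hg₂, hg₀⟩ := hg z hz
  refine (_root_.hasDerivAt_wronskian hf₁ hf₂ hg₁ hg₂).congr_deriv ?_
  simp only [wronskian]
  field_simp
  linear_combination f z * hg₀ - g z * hf₀

theorem exists_wronskian_div_eq (hs : IsOpen s) (hs' : IsPreconnected s)
    (ha : ∀ z ∈ s, a z ≠ 0) (hf : SolvesSecondOrderLinear a b c s f)
    (hg : SolvesSecondOrderLinear a b c s g) (hW : ∀ z ∈ s, wronskian f g z ≠ 0)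
    (hh : SolvesSecondOrderLinear a b c s h) (hk : SolvesSecondOrderLinear a b c s k) :
    ∃ α : ℝ, ∀ z ∈ s, wronskian h k z / wronskian f g z = α := by
  have hratio : ∀ z ∈ s, HasDerivAt (fun w => wronskian h k w / wronskian f g w) 0 z :=
    fun z hz => HasDerivAt.div_eq_zero_of_same_rate (hh.hasDerivAt_wronskian hk hz (ha z hz))
      (hf.hasDerivAt_wronskian hg hz (ha z hz)) (hW z hz)
  exact hs.exists_is_const_of_deriv_eq_zero hs'
    (fun z hz => (hratio z hz).differentiableAt.differentiableWithinAt)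
    (fun z hz => (hratio z hz).deriv)

theorem exists_eq_linear_combination (hs : IsOpen s) (hs' : IsPreconnected s)
    (ha : ∀ z ∈ s, a z ≠ 0) (hf : SolvesSecondOrderLinear a b c s f)
    (hg : SolvesSecondOrderLinear a b c s g) (hW : ∀ z ∈ s, wronskian f g z ≠ 0)
    (hh : SolvesSecondOrderLinear a b c s h) :
    ∃ c₁ c₂ : ℝ, ∀ z ∈ s, h z = c₁ * f z + c₂ * g z := by
  obtain ⟨α, hα⟩ := exists_wronskian_div_eq hs hs' ha hf hg hW hh hg
  obtain ⟨β, hβ⟩ := exists_wronskian_div_eq hs hs' ha hf hg hW hh hf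
  refine ⟨α, -β, fun z hz => ?_⟩
  have hWz := hW z hz
  rw [← hα z hz, ← hβ z hz]
  field_simp
  linear_combination mul_wronskian_eq f g h z

end SolvesSecondOrderLinear

abbrev SolvesTailODE : (ℝ → ℝ) → Prop :=
  SolvesSecondOrderLinear (fun z => 2 * z ^ 2) (fun z => 2 * z - 1) (fun _ => -2) (Ioi 0)

lemma solvesTailODE_iff {h : ℝ → ℝ} :
    SolvesTailODE h ↔
      (∀ z : ℝ, 0 < z → DifferentiableAt ℝ h z ∧ DifferentiableAt ℝ (deriv h) z) ∧
      ∀ z : ℝ, 0 < z →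
        2 * z ^ 2 * deriv (deriv h) z + (2 * z - 1) * deriv h z - 2 * h z = 0 := by
  simp only [SolvesSecondOrderLinear, mem_Ioi, neg_mul, ← sub_eq_add_neg]
  exact ⟨fun H => ⟨fun z hz => ⟨(H z hz).1, (H z hz).2.1⟩, fun z hz => (H z hz).2.2⟩,
    fun H z hz => ⟨(H.1 z hz).1, (H.1 z hz).2, H.2 z hz⟩⟩

def expSol (z : ℝ) : ℝ := z * exp (-(1 / (2 * z)))

lemma hasDerivAt_one_div_two_mul {z : ℝ} (hz : z ≠ 0) :
    HasDerivAt (fun w => 1 / (2 * w)) (-(1 / (2 * z ^ 2))) z :=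
  ((hasDerivAt_const z (1 : ℝ)).div ((hasDerivAt_id' z).const_mul 2) (by simpa)).congr_deriv
    (by field_simp; ring)

lemma hasDerivAt_exp_neg_one_div_two_mul {z : ℝ} (hz : z ≠ 0) :
    HasDerivAt (fun w => exp (-(1 / (2 * w)))) (exp (-(1 / (2 * z))) / (2 * z ^ 2)) z :=
  (hasDerivAt_one_div_two_mul hz).neg.exp.congr_deriv (by simp only [Pi.neg_apply]; field_simp)

lemma hasDerivAt_expSol {z : ℝ} (hz : z ≠ 0) :
    HasDerivAt expSol ((1 + 1 / (2 * z)) * exp (-(1 / (2 * z)))) z :=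
  ((hasDerivAt_id z).mul (hasDerivAt_exp_neg_one_div_two_mul hz)).congr_deriv
    (by simp only [id]; field_simp)

lemma hasDerivAt_deriv_expSol {z : ℝ} (hz : z ≠ 0) :
    HasDerivAt (deriv expSol) (exp (-(1 / (2 * z))) / (4 * z ^ 3)) z := by
  refine hasDerivAt_deriv_of_eventually_hasDerivAt
    ((eventually_ne_nhds hz).mono fun _ hw => hasDerivAt_expSol hw) ?_
  exact (((hasDerivAt_one_div_two_mul hz).const_add 1).mul
    (hasDerivAt_exp_neg_one_div_two_mul hz)).congr_deriv (by field_simp; ring)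

lemma solvesTailODE_expSol : SolvesTailODE expSol := fun z hz =>
  have hz₀ : z ≠ 0 := (mem_Ioi.mp hz).ne'
  ⟨(hasDerivAt_expSol hz₀).differentiableAt, (hasDerivAt_deriv_expSol hz₀).differentiableAt, by
    rw [(hasDerivAt_deriv_expSol hz₀).deriv, (hasDerivAt_expSol hz₀).deriv, expSol]
    field_simp
    ring⟩

lemma hasDerivAt_two_mul_sub_one (z : ℝ) : HasDerivAt (fun w : ℝ => 2 * w - 1) 2 z := by
  simpa using ((hasDerivAt_id z).const_mul 2).sub_const 1

lemma deriv_two_mul_sub_one : deriv (fun w : ℝ => 2 * w - 1) = fun _ => 2 :=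
  funext fun z => (hasDerivAt_two_mul_sub_one z).deriv

lemma solvesTailODE_two_mul_sub_one : SolvesTailODE fun z => 2 * z - 1 := fun z _ =>
  ⟨(hasDerivAt_two_mul_sub_one z).differentiableAt,
    by simp only [deriv_two_mul_sub_one]; exact differentiableAt_const _,
    by simp only [deriv_two_mul_sub_one, deriv_const']; ring⟩

lemma wronskian_expSol_two_mul_sub_one {z : ℝ} (hz : z ≠ 0) :
    wronskian expSol (fun w => 2 * w - 1) z = exp (-(1 / (2 * z))) / (2 * z) := by
  rw [wronskian, deriv_two_mul_sub_one, (hasDerivAt_expSol hz).deriv, expSol]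
  field_simp
  ring

lemma Ttail_eq_two_mul_expSol_sub : Ttail = fun z => 2 * expSol z - (2 * z - 1) := by
  ext z; simp only [Ttail, expSol]; ring

lemma hasDerivAt_Ttail {z : ℝ} (hz : z ≠ 0) : HasDerivAt Ttail (2 * deriv expSol z - 2) z := by
  rw [Ttail_eq_two_mul_expSol_sub]
  exact ((hasDerivAt_expSol hz).differentiableAt.hasDerivAt.const_mul 2).sub
    (hasDerivAt_two_mul_sub_one z)

lemma hasDerivAt_deriv_Ttail {z : ℝ} (hz : z ≠ 0) :
    HasDerivAt (deriv Ttail) (2 * deriv (deriv expSol) z) z :=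
  hasDerivAt_deriv_of_eventually_hasDerivAt
    ((eventually_ne_nhds hz).mono fun _ hw => hasDerivAt_Ttail hw)
    (((hasDerivAt_deriv_expSol hz).differentiableAt.hasDerivAt.const_mul 2).sub_const 2)

lemma solvesTailODE_Ttail : SolvesTailODE Ttail := fun z hz =>
  have hz₀ : z ≠ 0 := (mem_Ioi.mp hz).ne'
  ⟨(hasDerivAt_Ttail hz₀).differentiableAt, (hasDerivAt_deriv_Ttail hz₀).differentiableAt, by
    rw [(hasDerivAt_deriv_Ttail hz₀).deriv, (hasDerivAt_Ttail hz₀).deriv, Ttail_eq_two_mul_expSol_sub]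
    linear_combination 2 * (solvesTailODE_expSol z hz).2.2⟩

lemma deriv_Ttail {z : ℝ} (hz : z ≠ 0) :
    deriv Ttail z = (2 + 1 / z) * exp (-(1 / (2 * z))) - 2 := by
  rw [(hasDerivAt_Ttail hz).deriv, (hasDerivAt_expSol hz).deriv]
  field_simp

lemma tendsto_Ttail_nhdsGT_zero : Tendsto Ttail (𝓝[>] 0) (𝓝 1) := by
  have hexp : Tendsto (fun z : ℝ => exp (-(1 / (2 * z)))) (𝓝[>] 0) (𝓝 0) := by
    refine tendsto_exp_comp_nhds_zero.mpr (tendsto_neg_atTop_atBot.comp ?_)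
    exact (tendsto_inv_nhdsGT_zero.atTop_div_const two_pos).congr fun z => by ring
  have hid : Tendsto (fun z : ℝ => z) (𝓝[>] 0) (𝓝 0) := tendsto_id.mono_left nhdsWithin_le_nhds
  have := ((hid.const_mul 2).mul ((tendsto_const_nhds (x := (1 : ℝ))).sub hexp)).const_sub 1
  rw [mul_zero, zero_mul, sub_zero] at this
  exact this

lemma tendsto_Ttail_atTop : Tendsto Ttail atTop (𝓝 0) := by
  have hslope := ((hasDerivAt_neg (0 : ℝ)).exp).tendsto_slope_zero_right
  have ht : Tendsto (fun z : ℝ => (2 * z)⁻¹) atTop (𝓝[>] 0) :=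
    tendsto_inv_atTop_nhdsGT_zero.comp (tendsto_id.const_mul_atTop two_pos)
  have := (hslope.comp ht).const_add 1
  rw [neg_zero, Real.exp_zero, one_mul, add_neg_cancel] at this
  refine this.congr fun z => ?_
  simp only [Function.comp_apply, Ttail, zero_add, inv_inv, smul_eq_mul, one_div]
  ring

theorem stmt18 :
    (∀ z : ℝ, 0 < z → DifferentiableAt ℝ Ttail z ∧ DifferentiableAt ℝ (deriv Ttail) z) ∧
    (∀ z : ℝ, 0 < z →
      2 * z ^ 2 * deriv (deriv Ttail) z + (2 * z - 1) * deriv Ttail z - 2 * Ttail z = 0) ∧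
    Filter.Tendsto Ttail (nhdsWithin 0 (Ioi 0)) (nhds 1) ∧
    Filter.Tendsto Ttail Filter.atTop (nhds 0) ∧
    (∀ z : ℝ, 0 < z → -deriv Ttail z = 2 - (1 / z + 2) * Real.exp (-(1 / (2 * z)))) ∧
    ∀ h : ℝ → ℝ,
      (∀ z : ℝ, 0 < z → DifferentiableAt ℝ h z ∧ DifferentiableAt ℝ (deriv h) z) →
      (∀ z : ℝ, 0 < z →
        2 * z ^ 2 * deriv (deriv h) z + (2 * z - 1) * deriv h z - 2 * h z = 0) →
      ∃ c₁ c₂ : ℝ, ∀ z : ℝ, 0 < z →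
        h z = c₁ * z * Real.exp (-(1 / (2 * z))) + c₂ * (2 * z - 1) := by
  obtain ⟨hT_diff, hT_ode⟩ := solvesTailODE_iff.mp solvesTailODE_Ttail
  refine ⟨hT_diff, hT_ode, tendsto_Ttail_nhdsGT_zero, tendsto_Ttail_atTop,
    fun z hz => ?_, fun h h_diff h_ode => ?_⟩
  · rw [deriv_Ttail hz.ne']
    ring
  · have ha : ∀ z ∈ Ioi (0 : ℝ), 2 * z ^ 2 ≠ 0 := fun z (hz : 0 < z) => by positivity
    have hW : ∀ z ∈ Ioi (0 : ℝ), wronskian expSol (fun w => 2 * w - 1) z ≠ 0 :=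
      fun z (hz : 0 < z) => by
        rw [wronskian_expSol_two_mul_sub_one hz.ne']
        positivity
    obtain ⟨c₁, c₂, hc⟩ := SolvesSecondOrderLinear.exists_eq_linear_combination isOpen_Ioi
      isPreconnected_Ioi ha solvesTailODE_expSol solvesTailODE_two_mul_sub_one hW
      (solvesTailODE_iff.mpr ⟨h_diff, h_ode⟩)
    exact ⟨c₁, c₂, fun z hz => by rw [hc z hz, expSol, mul_assoc]⟩

end
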